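/- The decoherence-free algebra of a unital completely positive map Φ is the largest Φ-invariant C*-subalgebra M of B(H) such that each restriction Φⁿ|_M is a *-homomorphism: if M is a Φ-invariant *-subalgebra and Φⁿ restricted to M is multiplicative for all n, then M ⊆ N. -/

import Mathlib

/-!
A unital completely positive map `Ψ` satisfies the Kadison–Schwarz inequality
`Ψ (Zᴴ * Z) ≥ (Ψ Z)ᴴ * Ψ Z`: the block matrix `[[Ψ (Zᴴ * Z), (Ψ Z)ᴴ], [Ψ Z, 1]]` is positive, and
so is the Schur complement of its identity block. If equality holds at `X`, the defect at
`Y + t • X` is positive for every `t : ℂ` and depends on `t` only through `conj t` and `t`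
linearly, so both coefficients vanish; hence `Ψ (Yᴴ * X) = (Ψ Y)ᴴ * Ψ X` for all `Y` (Choi's
multiplicative domain theorem). For `X` in a *-subalgebra on which `Ψ = Φ ^ m` is multiplicative,
equality holds at `X` and at `Xᴴ`, so `Φ ^ m` is multiplicative against `X` on both sides.
-/
open Matrix
open scoped ComplexOrder

abbrev MatC (n : ℕ) := Matrix (Fin n) (Fin n) ℂ

/-- Complete positivity of a linear map on matrices: every matrix amplification
preserves positive semidefiniteness. -/
def IsCompletelyPositive {n : ℕ} (Φ : Module.End ℂ (MatC n)) : Prop :=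
  ∀ (k : ℕ) (M : Matrix (Fin n × Fin k) (Fin n × Fin k) ℂ), M.PosSemidef →
    (Matrix.of fun p q : Fin n × Fin k =>
      Φ (Matrix.of fun i j => M (i, p.2) (j, q.2)) p.1 q.1).PosSemidef

/-- The decoherence-free algebra of Φ. -/
def decFree {n : ℕ} (Φ : Module.End ℂ (MatC n)) : Set (MatC n) :=
  {X | ∀ (m : ℕ) (Y : MatC n), (Φ ^ m) (Y * X) = (Φ ^ m) Y * (Φ ^ m) X ∧
        (Φ ^ m) (X * Y) = (Φ ^ m) X * (Φ ^ m) Y}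

lemma Complex.eq_zero_of_forall_nonneg_add_ofReal_mul {a c : ℂ}
    (h : ∀ r : ℝ, 0 ≤ a + r * c) : c = 0 := by
  have him : ∀ r : ℝ, a.im + r * c.im = 0 := fun r => by
    simpa using ((Complex.le_def.mp (h r)).2).symm
  have hre : ∀ r : ℝ, 0 ≤ a.re + r * c.re := fun r => by
    simpa using (Complex.le_def.mp (h r)).1
  have hcim : c.im = 0 := by linarith [him 0, him 1]
  have hcre : c.re = 0 := by
    by_contra hc
    have := hre (-(a.re + 1) / c.re)
    rw [div_mul_cancel₀ _ hc] at this
    linarith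
  exact Complex.ext hcre hcim

lemma Complex.eq_zero_of_forall_nonneg_add_conj_mul_add_mul {a b b' : ℂ}
    (h : ∀ t : ℂ, 0 ≤ a + starRingEnd ℂ t * b' + t * b) : b = 0 := by
  have hsum : b + b' = 0 := Complex.eq_zero_of_forall_nonneg_add_ofReal_mul (a := a) fun r => by
    convert h r using 1
    simp only [Complex.conj_ofReal]; ring
  have hdiff : Complex.I * (b - b') = 0 :=
    Complex.eq_zero_of_forall_nonneg_add_ofReal_mul (a := a) fun r => by
      convert h (r * Complex.I) using 1
      simp only [map_mul, Complex.conj_ofReal, Complex.conj_I]; ring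
  have hdiff' : b - b' = 0 := (mul_eq_zero.mp hdiff).resolve_left Complex.I_ne_zero
  linear_combination hsum / 2 + hdiff' / 2

lemma Matrix.eq_zero_of_forall_star_dotProduct_mulVec_eq_zero {ι : Type*} [Fintype ι]
    [DecidableEq ι] {B : Matrix ι ι ℂ} (h : ∀ v, star v ⬝ᵥ (B *ᵥ v) = 0) : B = 0 := by
  have hB : Matrix.toEuclideanLin B = 0 := (inner_map_self_eq_zero _).mp fun x => by
    rw [EuclideanSpace.inner_eq_star_dotProduct, dotProduct_comm, ← star_star (WithLp.ofLp x),
      Matrix.star_dotProduct_star]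
    simp [h]
  simpa using hB

section Amplification

variable {n : ℕ}

def amplify (Φ : Module.End ℂ (MatC n)) {k : ℕ} (M : Matrix (Fin n × Fin k) (Fin n × Fin k) ℂ) :
    Matrix (Fin n × Fin k) (Fin n × Fin k) ℂ :=
  Matrix.of fun p q => Φ (Matrix.of fun i j => M (i, p.2) (j, q.2)) p.1 q.1

def blockMatrix (A B C D : MatC n) : Matrix (Fin n × Fin 2) (Fin n × Fin 2) ℂ :=
  Matrix.of fun p q => !![A, B; C, D] p.2 q.2 p.1 q.1

lemma amplify_blockMatrix (Φ : Module.End ℂ (MatC n)) (A B C D : MatC n) :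
    amplify Φ (blockMatrix A B C D) = blockMatrix (Φ A) (Φ B) (Φ C) (Φ D) := by
  ext ⟨i, s⟩ ⟨j, t⟩; fin_cases s <;> fin_cases t <;> rfl

lemma blockMatrix_conjTranspose (A B C D : MatC n) :
    (blockMatrix A B C D)ᴴ = blockMatrix Aᴴ Cᴴ Bᴴ Dᴴ := by
  ext ⟨i, s⟩ ⟨j, t⟩; fin_cases s <;> fin_cases t <;> rfl

lemma blockMatrix_mul (A B C D A' B' C' D' : MatC n) :
    blockMatrix A B C D * blockMatrix A' B' C' D'
      = blockMatrix (A * A' + B * C') (A * B' + B * D') (C * A' + D * C') (C * B' + D * D') := by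
  ext ⟨i, s⟩ ⟨j, t⟩
  fin_cases s <;> fin_cases t <;>
    simp [blockMatrix, Matrix.mul_apply, Fintype.sum_prod_type, Fin.sum_univ_two,
      Finset.sum_add_distrib]

lemma blockMatrix_submatrix_zero_zero (A B C D : MatC n) :
    (blockMatrix A B C D).submatrix (·, 0) (·, 0) = A := rfl

lemma blockMatrix_submatrix_zero_one (A B C D : MatC n) :
    (blockMatrix A B C D).submatrix (·, 0) (·, 1) = B := rfl

namespace IsCompletelyPositive

variable {Φ Ψ : Module.End ℂ (MatC n)}

lemma posSemidef_amplify (hΦ : IsCompletelyPositive Φ) {k : ℕ}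
    {M : Matrix (Fin n × Fin k) (Fin n × Fin k) ℂ} (hM : M.PosSemidef) :
    (amplify Φ M).PosSemidef :=
  hΦ k M hM

lemma mul (hΦ : IsCompletelyPositive Φ) (hΨ : IsCompletelyPositive Ψ) :
    IsCompletelyPositive (Φ * Ψ) :=
  fun _ _ hM => hΦ.posSemidef_amplify (hΨ.posSemidef_amplify hM)

lemma pow (hΦ : IsCompletelyPositive Φ) (m : ℕ) : IsCompletelyPositive (Φ ^ m) := by
  induction m with
  | zero => exact fun _ _ hM => hM
  | succ m ih => rw [pow_succ]; exact ih.mul hΦ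

lemma map_conjTranspose (hΦ : IsCompletelyPositive Φ) (Z : MatC n) : Φ Zᴴ = (Φ Z)ᴴ := by
  have hpos : (blockMatrix 1 Zᴴ Z (Z * Zᴴ)).PosSemidef := by
    have e : blockMatrix 1 Zᴴ Z (Z * Zᴴ) = (blockMatrix 1 Zᴴ 0 0)ᴴ * blockMatrix 1 Zᴴ 0 0 := by
      rw [blockMatrix_conjTranspose, blockMatrix_mul]; simp
    rw [e]; exact posSemidef_conjTranspose_mul_self _
  have hherm := (hΦ.posSemidef_amplify hpos).isHermitian
  rw [amplify_blockMatrix, IsHermitian, blockMatrix_conjTranspose] at hherm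
  simpa only [blockMatrix_submatrix_zero_one] using congrArg (·.submatrix (·, 0) (·, 1)) hherm.symm

lemma posSemidef_map_conjTranspose_mul_self_sub (hΦ : IsCompletelyPositive Φ) (hunit : Φ 1 = 1)
    (Z : MatC n) : (Φ (Zᴴ * Z) - (Φ Z)ᴴ * Φ Z).PosSemidef := by
  have hpos : (blockMatrix (Zᴴ * Z) Zᴴ Z 1).PosSemidef := by
    have e : blockMatrix (Zᴴ * Z) Zᴴ Z 1 = (blockMatrix Z 1 0 0)ᴴ * blockMatrix Z 1 0 0 := by
      rw [blockMatrix_conjTranspose, blockMatrix_mul]; simp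
    rw [e]; exact posSemidef_conjTranspose_mul_self _
  have hamp := hΦ.posSemidef_amplify hpos
  rw [amplify_blockMatrix, hunit, hΦ.map_conjTranspose] at hamp
  -- conjugating by `[[1, 0], [-Φ Z, 0]]` leaves the Schur complement of the identity block
  have hconj := (hamp.conjTranspose_mul_mul_same (blockMatrix 1 0 (-Φ Z) 0)).submatrix (·, 0)
  rw [blockMatrix_conjTranspose, blockMatrix_mul, blockMatrix_mul] at hconj
  simpa [sub_eq_add_neg, blockMatrix_submatrix_zero_zero] using hconj

lemma map_conjTranspose_mul_of_map_conjTranspose_mul_self (hΦ : IsCompletelyPositive Φ)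
    (hunit : Φ 1 = 1) {X : MatC n} (hX : Φ (Xᴴ * X) = (Φ X)ᴴ * Φ X) (Y : MatC n) :
    Φ (Yᴴ * X) = (Φ Y)ᴴ * Φ X := by
  refine sub_eq_zero.mp (Matrix.eq_zero_of_forall_star_dotProduct_mulVec_eq_zero fun v => ?_)
  apply Complex.eq_zero_of_forall_nonneg_add_conj_mul_add_mul
    (a := star v ⬝ᵥ ((Φ (Yᴴ * Y) - (Φ Y)ᴴ * Φ Y) *ᵥ v))
    (b' := star v ⬝ᵥ ((Φ (Xᴴ * Y) - (Φ X)ᴴ * Φ Y) *ᵥ v))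
  intro t
  have expand : Φ ((Y + t • X)ᴴ * (Y + t • X)) - (Φ (Y + t • X))ᴴ * Φ (Y + t • X)
      = (Φ (Yᴴ * Y) - (Φ Y)ᴴ * Φ Y)
        + starRingEnd ℂ t • (Φ (Xᴴ * Y) - (Φ X)ᴴ * Φ Y)
        + t • (Φ (Yᴴ * X) - (Φ Y)ᴴ * Φ X) := by
    simp only [conjTranspose_add, conjTranspose_smul, mul_add, add_mul, map_add, map_smul,
      smul_mul_assoc, mul_smul_comm, hX, ← starRingEnd_apply]
    module
  have hnonneg :=
    (hΦ.posSemidef_map_conjTranspose_mul_self_sub hunit (Y + t • X)).dotProduct_mulVec_nonneg v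
  rwa [expand, add_mulVec, add_mulVec, dotProduct_add, dotProduct_add, smul_mulVec, smul_mulVec,
    dotProduct_smul, dotProduct_smul, smul_eq_mul, smul_eq_mul] at hnonneg

lemma map_mul_of_map_conjTranspose_mul_self (hΦ : IsCompletelyPositive Φ) (hunit : Φ 1 = 1)
    {X : MatC n} (hX : Φ (Xᴴ * X) = (Φ X)ᴴ * Φ X) (Y : MatC n) : Φ (Y * X) = Φ Y * Φ X := by
  simpa [hΦ.map_conjTranspose] using
    hΦ.map_conjTranspose_mul_of_map_conjTranspose_mul_self hunit hX Yᴴ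

lemma map_mul_of_map_mul_conjTranspose_self (hΦ : IsCompletelyPositive Φ) (hunit : Φ 1 = 1)
    {X : MatC n} (hX : Φ (X * Xᴴ) = Φ X * (Φ X)ᴴ) (Y : MatC n) : Φ (X * Y) = Φ X * Φ Y := by
  have hXstar : Φ (Xᴴᴴ * Xᴴ) = (Φ Xᴴ)ᴴ * Φ Xᴴ := by
    rw [conjTranspose_conjTranspose, hX, hΦ.map_conjTranspose, conjTranspose_conjTranspose]
  have h := congrArg conjTranspose (hΦ.map_mul_of_map_conjTranspose_mul_self hunit hXstar Yᴴ)
  rw [← hΦ.map_conjTranspose, conjTranspose_mul] at h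
  simpa [hΦ.map_conjTranspose] using h

end IsCompletelyPositive

end Amplification

theorem decFree_largest_general {n : ℕ} (Φ : Module.End ℂ (MatC n))
    (hCP : IsCompletelyPositive Φ) (hunit : Φ 1 = 1)
    (M : StarSubalgebra ℂ (MatC n))
    (hmul : ∀ (m : ℕ), ∀ X ∈ M, ∀ Y ∈ M, (Φ ^ m) (X * Y) = (Φ ^ m) X * (Φ ^ m) Y) :
    (M : Set (MatC n)) ⊆ decFree Φ := by
  intro X hX m Y
  have hCPm := hCP.pow m
  have hunitm : (Φ ^ m) 1 = 1 := by rw [Module.End.pow_apply, Function.iterate_fixed hunit]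
  have hXstar : Xᴴ ∈ M := star_mem hX
  refine ⟨hCPm.map_mul_of_map_conjTranspose_mul_self hunitm ?_ Y,
    hCPm.map_mul_of_map_mul_conjTranspose_self hunitm ?_ Y⟩
  · rw [← hCPm.map_conjTranspose]; exact hmul m _ hXstar X hX
  · rw [← hCPm.map_conjTranspose]; exact hmul m X hX _ hXstar

/-- The decoherence-free algebra is the largest Φ-invariant *-subalgebra
on which every power of Φ restricts to a *-homomorphism. -/
theorem decFree_largest {n : ℕ} (Φ : Module.End ℂ (MatC n))
    (hCP : IsCompletelyPositive Φ) (hunit : Φ 1 = 1)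
    (M : StarSubalgebra ℂ (MatC n))
    (hinv : ∀ X ∈ M, Φ X ∈ M)
    (hmul : ∀ (m : ℕ), ∀ X ∈ M, ∀ Y ∈ M, (Φ ^ m) (X * Y) = (Φ ^ m) X * (Φ ^ m) Y) :
    (M : Set (MatC n)) ⊆ decFree Φ :=
  decFree_largest_general Φ hCP hunit M hmul
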